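/- Let Q ⊆ ℝ^m be a nonempty closed convex set, let t > 0, and let x, w, v, λ ∈ ℝ^m with x + t w ≠ 0. Assume: λ ∈ Q and ⟨λ, x⟩ ≥ ⟨z, x⟩ for all z ∈ Q (so σ_Q(x) = ⟨λ, x⟩); ‖v‖ = 1; there exist δ > 0, M > 0 and r : [0,δ] → ℝ^m with ‖r(s)‖ ≤ M and λ + s v + (s²/2) r(s) ∈ Q for all s ∈ [0,δ]; ⟨v, x⟩ = 0 and ⟨v, w⟩ > 0. Then, in ℝ ∪ {+∞}, σ_Q(x + t w) − σ_Q(x) − t⟨λ, w⟩ ≥ (t²/2) · ⟨v, w⟩ · min{ δ/t , ⟨v, w⟩/(M‖x + t w‖) }. -/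
import Mathlib


open Set
open scoped InnerProductSpace

noncomputable section

/-- Support function of `Q ⊆ ℝ^m`, with values in the extended reals. -/
def supportFn {m : ℕ} (Q : Set (EuclideanSpace ℝ (Fin m))) (x : EuclideanSpace ℝ (Fin m)) :
    EReal :=
  ⨆ z ∈ Q, ((⟪z, x⟫_ℝ : ℝ) : EReal)

theorem stmt15 {m : ℕ} (Q : Set (EuclideanSpace ℝ (Fin m)))
    (hQne : Q.Nonempty) (hQc : IsClosed Q) (hQconv : Convex ℝ Q)
    (t : ℝ) (ht : 0 < t)
    (x w v lam : EuclideanSpace ℝ (Fin m))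
    (hxtw : x + t • w ≠ 0)
    (hlam : lam ∈ Q) (hmax : ∀ z ∈ Q, ⟪z, x⟫_ℝ ≤ ⟪lam, x⟫_ℝ)
    (hv : ‖v‖ = 1)
    (δ M : ℝ) (hδ : 0 < δ) (hM : 0 < M)
    (r : ℝ → EuclideanSpace ℝ (Fin m))
    (hr : ∀ s ∈ Icc (0 : ℝ) δ, ‖r s‖ ≤ M ∧ lam + s • v + (s ^ 2 / 2) • r s ∈ Q)
    (hvx : ⟪v, x⟫_ℝ = 0) (hvw : 0 < ⟪v, w⟫_ℝ) :
    supportFn Q (x + t • w) - supportFn Q x - ((t * ⟪lam, w⟫_ℝ : ℝ) : EReal) ≥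
      (((t ^ 2 / 2) * (⟪v, w⟫_ℝ * min (δ / t) (⟪v, w⟫_ℝ / (M * ‖x + t • w‖))) : ℝ) : EReal) := by
  have hN : 0 < ‖x + t • w‖ := norm_pos_iff.mpr hxtw
  set N := ‖x + t • w‖ with hNdef
  set V := ⟪v, w⟫_ℝ with hVdef
  set μ := min (δ / t) (V / (M * N)) with hμdef
  have hμpos : 0 < μ := lt_min (div_pos hδ ht) (div_pos hvw (mul_pos hM hN))
  set s := t * μ with hsdef
  have hspos : 0 < s := mul_pos ht hμpos
  have hsδ : s ≤ δ := by
    have : μ ≤ δ / t := min_le_left _ _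
    calc s = t * μ := rfl
    _ ≤ t * (δ / t) := by nlinarith
    _ = δ := by field_simp
  obtain ⟨hrM, hzQ⟩ := hr s ⟨hspos.le, hsδ⟩
  set z := lam + s • v + (s ^ 2 / 2) • r s with hzdef
  -- supportFn Q x = ⟪lam, x⟫
  have hsfx : supportFn Q x = ((⟪lam, x⟫_ℝ : ℝ) : EReal) := by
    apply le_antisymm
    · exact iSup₂_le fun z hz => EReal.coe_le_coe_iff.mpr (hmax z hz)
    · exact le_iSup₂ (f := fun z (_ : z ∈ Q) => ((⟪z, x⟫_ℝ : ℝ) : EReal)) lam hlam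
  have hsfy : ((⟪z, x + t • w⟫_ℝ : ℝ) : EReal) ≤ supportFn Q (x + t • w) :=
    le_iSup₂ (f := fun z (_ : z ∈ Q) => ((⟪z, x + t • w⟫_ℝ : ℝ) : EReal)) z hzQ
  -- key real inequality
  have hkey : (t ^ 2 / 2) * (V * μ) ≤ ⟪z, x + t • w⟫_ℝ - ⟪lam, x⟫_ℝ - t * ⟪lam, w⟫_ℝ := by
    have hCS : -(M * N) ≤ ⟪r s, x + t • w⟫_ℝ := by
      have h1 := abs_real_inner_le_norm (r s) (x + t • w)
      have h2 : ‖r s‖ * N ≤ M * N := mul_le_mul_of_nonneg_right hrM hN.le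
      have := neg_abs_le ⟪r s, x + t • w⟫_ℝ
      nlinarith
    have hexp : ⟪z, x + t • w⟫_ℝ =
        ⟪lam, x⟫_ℝ + t * ⟪lam, w⟫_ℝ + s * (t * V) + (s ^ 2 / 2) * ⟪r s, x + t • w⟫_ℝ := by
      simp only [hzdef, inner_add_left, inner_add_right, real_inner_smul_left,
        real_inner_smul_right, hvx, hVdef]
      ring
    have hμle : μ ≤ V / (M * N) := min_le_right _ _
    have hμMN : μ * (M * N) ≤ V := by
      exact (le_div_iff₀ (mul_pos hM hN)).mp hμle
    rw [hexp, hsdef]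
    nlinarith [sq_nonneg t, sq_nonneg μ, mul_pos hM hN, hμpos, ht,
      mul_le_mul_of_nonneg_left hμMN hμpos.le, sq_nonneg (t * μ)]
  -- assemble in EReal
  rw [hsfx]
  calc (((t ^ 2 / 2) * (V * μ) : ℝ) : EReal)
      ≤ ((⟪z, x + t • w⟫_ℝ - ⟪lam, x⟫_ℝ - t * ⟪lam, w⟫_ℝ : ℝ) : EReal) :=
        EReal.coe_le_coe_iff.mpr hkey
    _ = ((⟪z, x + t • w⟫_ℝ : ℝ) : EReal) - ((⟪lam, x⟫_ℝ : ℝ) : EReal)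
        - ((t * ⟪lam, w⟫_ℝ : ℝ) : EReal) := by
        rw [EReal.coe_sub, EReal.coe_sub]
    _ ≤ supportFn Q (x + t • w) - ((⟪lam, x⟫_ℝ : ℝ) : EReal)
        - ((t * ⟪lam, w⟫_ℝ : ℝ) : EReal) := by
        exact EReal.sub_le_sub (EReal.sub_le_sub hsfy le_rfl) le_rfl

end
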